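/- arXiv:1406.0899 — 8 statements merged into one kernel-verified Lean document; each statement's English description precedes it below -/
import Mathlib

section
/- Let F : R^n → R be convex with bounded curvature constant μ_F on C = conv(D), where D is a finite set of points. Suppose points y, z ∈ C satisfy F(y) ≤ F(z) − ε for some ε > 0. Then for any γ ∈ (0, 1) and any step size β with 0 < β ≤ (1−γ)·min{ε/(μ_F · x̄_D²), 1}, where x̄_D = 2·max_{x ∈ D} ‖x‖₂, there exists x ∈ D such that F((1−β)z + βx) ≤ F(z) − γβε. -/
/-!
Let `g` be the subgradient of `F` at `z`. The affine function `v ↦ ⟪g, v - z⟫` attains its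
minimum over `conv D` at a point `x ∈ D`, and the subgradient inequality gives
`⟪g, x - z⟫ ≤ ⟪g, y - z⟫ ≤ F y - F z ≤ -ε`. Moving from `z` towards `x` by `β`, the curvature
bound gives a decrease of at least `β ε - μ_F β² ‖x - z‖²`, and `‖x - z‖ ≤ x̄_D` together with the
step-size condition makes the quadratic loss at most `(1 - γ) β ε`.
-/

open RealInnerProductSpace

variable {E : Type*} [NormedAddCommGroup E] [InnerProductSpace ℝ E]

def HasBoundedCurvatureOn (F : E → ℝ) (g : E → E) (μ : ℝ) (C : Set E) : Prop :=
  ∀ w δ, w ∈ C → w + δ ∈ C → F (w + δ) - F w ≤ ⟪g w, δ⟫ + μ * ‖δ‖ ^ 2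

theorem HasBoundedCurvatureOn.apply_smul_add_smul_le {F : E → ℝ} {g : E → E} {μ : ℝ} {C : Set E}
    (h : HasBoundedCurvatureOn F g μ C) (hC : Convex ℝ C) {z x : E} (hz : z ∈ C) (hx : x ∈ C)
    {β : ℝ} (hβ0 : 0 ≤ β) (hβ1 : β ≤ 1) :
    F ((1 - β) • z + β • x) ≤ F z + β * ⟪g z, x - z⟫ + μ * β ^ 2 * ‖x - z‖ ^ 2 := by
  have hseg : (1 - β) • z + β • x = z + β • (x - z) := by module
  have hmem : z + β • (x - z) ∈ C := hseg ▸ hC hz hx (by linarith) hβ0 (by ring)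
  have hstep := h z (β • (x - z)) hz hmem
  rw [inner_smul_right, norm_smul, Real.norm_of_nonneg hβ0, mul_pow] at hstep
  rw [hseg]
  linarith

theorem exists_mem_inner_le_of_mem_convexHull {s : Set E} {y : E} (g : E)
    (hy : y ∈ convexHull ℝ s) : ∃ x ∈ s, ⟪g, x⟫ ≤ ⟪g, y⟫ :=
  ((innerₛₗ ℝ g).concaveOn convex_univ).exists_le_of_mem_convexHull (Set.subset_univ s) hy

theorem norm_le_of_mem_convexHull {s : Set E} {z : E} {M : ℝ} (hs : ∀ x ∈ s, ‖x‖ ≤ M)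
    (hz : z ∈ convexHull ℝ s) : ‖z‖ ≤ M := by
  obtain ⟨x, hx, hzx⟩ := convexOn_univ_norm.exists_ge_of_mem_convexHull (Set.subset_univ s) hz
  exact hzx.trans (hs x hx)

theorem mul_le_mul_of_le_mul_min_div {a c t β : ℝ} (ha : 0 ≤ a) (ht : 0 ≤ t) (hβ0 : 0 ≤ β)
    (hβ : β ≤ t * min (a / c) 1) : c * β ≤ t * a := by
  rcases le_or_gt c 0 with hc | hc
  · nlinarith
  · have hβa : β ≤ t * (a / c) := hβ.trans (mul_le_mul_of_nonneg_left (min_le_left _ _) ht)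
    rw [mul_div_assoc', le_div_iff₀ hc] at hβa
    linarith

theorem EuclideanSpace.sum_mul_eq_inner {n : ℕ} (u v : EuclideanSpace ℝ (Fin n)) :
    ∑ j, u j * v j = ⟪u, v⟫ := by
  simp [PiLp.inner_apply, mul_comm]

theorem nonconvex_descent_general {n : ℕ} (D : Set (EuclideanSpace ℝ (Fin n)))
    (F : EuclideanSpace ℝ (Fin n) → ℝ)
    (sg : EuclideanSpace ℝ (Fin n) → EuclideanSpace ℝ (Fin n))
    (hsg : ∀ w ∈ convexHull ℝ D, ∀ v, F w + ∑ j, sg w j * (v - w) j ≤ F v)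
    (μF : ℝ) (hμF : 0 ≤ μF)
    (hcurv : ∀ w δ, w ∈ convexHull ℝ D → w + δ ∈ convexHull ℝ D →
      F (w + δ) - F w ≤ (∑ j, sg w j * δ j) + μF * ‖δ‖ ^ 2)
    (M : ℝ) (hM : IsGreatest ((fun x => ‖x‖) '' D) M)
    (y z : EuclideanSpace ℝ (Fin n))
    (hy : y ∈ convexHull ℝ D) (hz : z ∈ convexHull ℝ D)
    (ε : ℝ) (hε : 0 < ε) (hFyz : F y ≤ F z - ε)
    (γ β : ℝ) (hγ : γ ∈ Set.Ioo (0:ℝ) 1)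
    (hβ0 : 0 < β) (hβ : β ≤ (1 - γ) * min (ε / (μF * (2 * M) ^ 2)) 1) :
    ∃ x ∈ D, F ((1 - β) • z + β • x) ≤ F z - γ * β * ε := by
  simp only [EuclideanSpace.sum_mul_eq_inner] at hsg hcurv
  obtain ⟨x, hxD, hxy⟩ := exists_mem_inner_le_of_mem_convexHull (sg z) hy
  refine ⟨x, hxD, ?_⟩
  have hdescent : ⟪sg z, x - z⟫ ≤ -ε := by
    have := hsg z hz y
    rw [inner_sub_right] at this ⊢
    linarith
  have hD_norm : ∀ v ∈ D, ‖v‖ ≤ M := fun v hv => hM.2 (Set.mem_image_of_mem _ hv)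
  have hdist : ‖x - z‖ ≤ 2 * M := by
    linarith [norm_sub_le x z, hD_norm x hxD, norm_le_of_mem_convexHull hD_norm hz]
  have hγ1 : 0 ≤ 1 - γ := by linarith [hγ.2]
  have hβ1 : β ≤ 1 - γ := hβ.trans (mul_le_of_le_one_right hγ1 (min_le_right _ _))
  have hβμ := mul_le_mul_of_le_mul_min_div hε.le hγ1 hβ0.le hβ
  have hcurv_step := HasBoundedCurvatureOn.apply_smul_add_smul_le hcurv (convex_convexHull ℝ D) hz
    (subset_convexHull ℝ D hxD) hβ0.le (by linarith [hγ.1])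
  calc F ((1 - β) • z + β • x)
      ≤ F z + β * ⟪sg z, x - z⟫ + μF * β ^ 2 * ‖x - z‖ ^ 2 := hcurv_step
    _ ≤ F z + β * -ε + μF * β ^ 2 * (2 * M) ^ 2 := by gcongr
    _ = F z - β * ε + β * (μF * (2 * M) ^ 2 * β) := by ring
    _ ≤ F z - β * ε + β * ((1 - γ) * ε) := by gcongr
    _ = F z - γ * β * ε := by ring

/-- Non-Convex Descent: if `F` is convex with bounded curvature constant `μF` on
`C = conv(D)` and `F(y) ≤ F(z) - ε`, then for any `γ ∈ (0,1)` and step size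
`0 < β ≤ (1-γ) min{ε/(μF x̄_D²), 1}` with `x̄_D = 2 max_{x∈D} ‖x‖`, there is `x ∈ D`
with `F((1-β)z + βx) ≤ F(z) - γβε`. -/
theorem nonconvex_descent {n : ℕ} (D : Set (EuclideanSpace ℝ (Fin n)))
    (hD : D.Finite) (hne : D.Nonempty)
    (F : EuclideanSpace ℝ (Fin n) → ℝ)
    (hF : ConvexOn ℝ Set.univ F)
    (sg : EuclideanSpace ℝ (Fin n) → EuclideanSpace ℝ (Fin n))
    (hsg : ∀ w ∈ convexHull ℝ D, ∀ v, F w + ∑ j, sg w j * (v - w) j ≤ F v)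
    (μF : ℝ) (hμF : 0 ≤ μF)
    (hcurv : ∀ w δ, w ∈ convexHull ℝ D → w + δ ∈ convexHull ℝ D →
      F (w + δ) - F w ≤ (∑ j, sg w j * δ j) + μF * ‖δ‖ ^ 2)
    (M : ℝ) (hM : IsGreatest ((fun x => ‖x‖) '' D) M)
    (y z : EuclideanSpace ℝ (Fin n))
    (hy : y ∈ convexHull ℝ D) (hz : z ∈ convexHull ℝ D)
    (ε : ℝ) (hε : 0 < ε) (hFyz : F y ≤ F z - ε)
    (γ β : ℝ) (hγ : γ ∈ Set.Ioo (0:ℝ) 1)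
    (hβ0 : 0 < β) (hβ : β ≤ (1 - γ) * min (ε / (μF * (2 * M) ^ 2)) 1) :
    ∃ x ∈ D, F ((1 - β) • z + β • x) ≤ F z - γ * β * ε :=
  nonconvex_descent_general D F sg hsg μF hμF hcurv M hM y z hy hz ε hε hFyz γ β hγ hβ0 hβ
end

section
/- Consider the constrained convex problem min_{z ∈ C} f(z) subject to g(z) ⪯ 0, with dual function q(λ) = min_{z∈C} (f(z) + λᵀg(z)). Suppose a Slater vector z̄ ∈ C exists with g(z̄) ≺ 0. Then for every δ ≥ 0 and every λ ⪰ 0 with q(λ) ≥ q(λ*) − δ (where λ* is a dual maximizer), ‖λ‖₂ ≤ (f(z̄) − q(λ*) + δ)/υ, where υ = min_{j} (−g_j(z̄)). -/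
/-!
Evaluating the dual function at the Slater point gives
`q(λ) ≤ f(z̄) + ∑ⱼ λⱼ gⱼ(z̄) ≤ f(z̄) - υ ‖λ‖₁`, and `‖λ‖₂ ≤ ‖λ‖₁`.
Combined with `q(λ*) - δ ≤ q(λ)` this is `υ ‖λ‖₂ ≤ f(z̄) - q(λ*) + δ`.
-/

open Finset

theorem EuclideanSpace.norm_le_sum_norm {𝕜 ι : Type*} [RCLike 𝕜] [Fintype ι]
    (x : EuclideanSpace 𝕜 ι) : ‖x‖ ≤ ∑ i, ‖x i‖ := by
  rw [← sq_le_sq₀ (norm_nonneg x) (sum_nonneg fun i _ => norm_nonneg _),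
    EuclideanSpace.norm_sq_eq]
  exact sum_sq_le_sq_sum_of_nonneg fun i _ => norm_nonneg _

theorem sum_mul_le_sum_mul_of_le {ι : Type*} [Fintype ι] {lam c : ι → ℝ} {b : ℝ}
    (hlam : ∀ i, 0 ≤ lam i) (hc : ∀ i, c i ≤ b) : ∑ i, lam i * c i ≤ (∑ i, lam i) * b := by
  rw [sum_mul]
  exact sum_le_sum fun i _ => mul_le_mul_of_nonneg_left (hc i) (hlam i)

theorem sInf_lagrangian_le_of_slater {E ι : Type*} [TopologicalSpace E] [Fintype ι]
    {C : Set E} (hC : IsCompact C) {f : E → ℝ} (hf : ContinuousOn f C) {g : ι → E → ℝ}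
    (hg : ∀ j, ContinuousOn (g j) C) {lam : ι → ℝ} (hlam : ∀ j, 0 ≤ lam j)
    {z : E} (hz : z ∈ C) {υ : ℝ} (hυ : ∀ j, υ ≤ -g j z) :
    sInf ((fun w => f w + ∑ j, lam j * g j w) '' C) ≤ f z - υ * ∑ j, lam j := by
  have hcont : ContinuousOn (fun w => f w + ∑ j, lam j * g j w) C :=
    hf.add (continuousOn_finsetSum _ fun j _ => continuousOn_const.mul (hg j))
  calc sInf ((fun w => f w + ∑ j, lam j * g j w) '' C)
      ≤ f z + ∑ j, lam j * g j z :=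
        csInf_le (hC.image_of_continuousOn hcont).bddBelow (Set.mem_image_of_mem _ hz)
    _ ≤ f z + (∑ j, lam j) * (-υ) := by
        gcongr
        exact sum_mul_le_sum_mul_of_le hlam fun j => le_neg_of_le_neg (hυ j)
    _ = f z - υ * ∑ j, lam j := by ring

theorem bounded_multipliers_general {n m : ℕ} (C : Set (EuclideanSpace ℝ (Fin n)))
    (hCc : IsCompact C)
    (f : EuclideanSpace ℝ (Fin n) → ℝ)
    (hfc : ContinuousOn f C)
    (g : Fin m → EuclideanSpace ℝ (Fin n) → ℝ)
    (hgc : ∀ j, ContinuousOn (g j) C)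
    (q : EuclideanSpace ℝ (Fin m) → ℝ)
    (hq : ∀ lam, q lam = sInf ((fun w => f w + ∑ j, lam j * g j w) '' C))
    (lamstar : EuclideanSpace ℝ (Fin m))
    (zbar : EuclideanSpace ℝ (Fin n)) (hzbar : zbar ∈ C)
    (hslater : ∀ j, g j zbar < 0)
    (υ : ℝ) (hυ : IsLeast (Set.range fun j => -(g j zbar)) υ)
    (δ : ℝ)
    (lam : EuclideanSpace ℝ (Fin m)) (hlam0 : ∀ j, 0 ≤ lam j)
    (hlamq : q lamstar - δ ≤ q lam) :
    ‖lam‖ ≤ (f zbar - q lamstar + δ) / υ := by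
  have hυ_pos : 0 < υ := by
    obtain ⟨j, rfl⟩ := hυ.1
    exact neg_pos.mpr (hslater j)
  have hdual : q lam ≤ f zbar - υ * ∑ j, lam j := by
    rw [hq]
    exact sInf_lagrangian_le_of_slater hCc hfc hgc hlam0 hzbar fun j => hυ.2 ⟨j, rfl⟩
  have hnorm : ‖lam‖ ≤ ∑ j, lam j := by
    simpa only [Real.norm_of_nonneg (hlam0 _)] using EuclideanSpace.norm_le_sum_norm lam
  rw [le_div_iff₀ hυ_pos]
  calc ‖lam‖ * υ ≤ (∑ j, lam j) * υ := by gcongr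
    _ ≤ f zbar - q lamstar + δ := by linarith

/-- Bounded Multipliers: if the Slater condition holds with Slater vector `z̄`, then any
`λ ⪰ 0` with `q(λ) ≥ q(λ*) - δ` satisfies `‖λ‖₂ ≤ (f(z̄) - q(λ*) + δ)/υ` where
`υ = min_j (-g_j(z̄))`. -/
theorem bounded_multipliers {n m : ℕ} (C : Set (EuclideanSpace ℝ (Fin n)))
    (hCc : IsCompact C) (hCconv : Convex ℝ C) (hCne : C.Nonempty)
    (f : EuclideanSpace ℝ (Fin n) → ℝ)
    (hf : ConvexOn ℝ C f) (hfc : ContinuousOn f C)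
    (g : Fin m → EuclideanSpace ℝ (Fin n) → ℝ)
    (hg : ∀ j, ConvexOn ℝ C (g j)) (hgc : ∀ j, ContinuousOn (g j) C)
    (q : EuclideanSpace ℝ (Fin m) → ℝ)
    (hq : ∀ lam, q lam = sInf ((fun w => f w + ∑ j, lam j * g j w) '' C))
    (lamstar : EuclideanSpace ℝ (Fin m)) (hlamstar0 : ∀ j, 0 ≤ lamstar j)
    (hlamstar : ∀ lam : EuclideanSpace ℝ (Fin m), (∀ j, 0 ≤ lam j) → q lam ≤ q lamstar)
    (zbar : EuclideanSpace ℝ (Fin n)) (hzbar : zbar ∈ C)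
    (hslater : ∀ j, g j zbar < 0)
    (υ : ℝ) (hυ : IsLeast (Set.range fun j => -(g j zbar)) υ)
    (δ : ℝ) (hδ : 0 ≤ δ)
    (lam : EuclideanSpace ℝ (Fin m)) (hlam0 : ∀ j, 0 ≤ lam j)
    (hlamq : q lamstar - δ ≤ q lam) :
    ‖lam‖ ≤ (f zbar - q lamstar + δ) / υ :=
  bounded_multipliers_general C hCc f hfc g hgc q hq lamstar zbar hzbar hslater υ hυ δ lam hlam0
    hlamq
end

section
/- Let λ ⪰ 0 in R^m satisfy q(λ) ≥ q(λ*) − δ where q is the dual function of a convex problem satisfying the Slater condition with Slater vector z̄. Then the sum of coordinates satisfies υ·∑_{j=1}^m λ_j ≤ f(z̄) − q(λ*) + δ, where υ = min_j (−g_j(z̄)) > 0. -/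
open Finset

theorem IsCompact.sInf_image_le {E : Type*} [TopologicalSpace E] {C : Set E} (hC : IsCompact C)
    {φ : E → ℝ} (hφ : ContinuousOn φ C) {z : E} (hz : z ∈ C) : sInf (φ '' C) ≤ φ z :=
  csInf_le (hC.image_of_continuousOn hφ).bddBelow (Set.mem_image_of_mem φ hz)

theorem sInf_lagrangian_le {E ι : Type*} [TopologicalSpace E] [Fintype ι] {C : Set E}
    (hC : IsCompact C) {f : E → ℝ} (hf : ContinuousOn f C) {g : ι → E → ℝ}
    (hg : ∀ j, ContinuousOn (g j) C) (lam : ι → ℝ) {z : E} (hz : z ∈ C) :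
    sInf ((fun w => f w + ∑ j, lam j * g j w) '' C) ≤ f z + ∑ j, lam j * g j z :=
  hC.sInf_image_le (hf.add (continuousOn_finsetSum _ fun j _ => (hg j).const_smul (lam j))) hz

theorem sum_mul_le_neg_mul_sum {ι : Type*} (s : Finset ι) {a b : ι → ℝ} {υ : ℝ}
    (ha : ∀ i ∈ s, 0 ≤ a i) (hb : ∀ i ∈ s, υ ≤ -b i) :
    ∑ i ∈ s, a i * b i ≤ -(υ * ∑ i ∈ s, a i) :=
  calc ∑ i ∈ s, a i * b i ≤ ∑ i ∈ s, a i * -υ :=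
        sum_le_sum fun i hi => mul_le_mul_of_nonneg_left (by linarith [hb i hi]) (ha i hi)
    _ = -(υ * ∑ i ∈ s, a i) := by rw [← sum_mul]; ring

theorem bounded_multiplier_sum_general {n m : ℕ} (C : Set (EuclideanSpace ℝ (Fin n)))
    (hCc : IsCompact C)
    (f : EuclideanSpace ℝ (Fin n) → ℝ)
    (hfc : ContinuousOn f C)
    (g : Fin m → EuclideanSpace ℝ (Fin n) → ℝ)
    (hgc : ∀ j, ContinuousOn (g j) C)
    (q : EuclideanSpace ℝ (Fin m) → ℝ)
    (hq : ∀ lam, q lam = sInf ((fun w => f w + ∑ j, lam j * g j w) '' C))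
    (lamstar : EuclideanSpace ℝ (Fin m))
    (zbar : EuclideanSpace ℝ (Fin n)) (hzbar : zbar ∈ C)
    (υ : ℝ) (hυ : IsLeast (Set.range fun j => -(g j zbar)) υ)
    (δ : ℝ)
    (lam : EuclideanSpace ℝ (Fin m)) (hlam0 : ∀ j, 0 ≤ lam j)
    (hlamq : q lamstar - δ ≤ q lam) :
    υ * ∑ j, lam j ≤ f zbar - q lamstar + δ := by
  have hq_le : q lam ≤ f zbar + ∑ j, lam j * g j zbar :=
    hq lam ▸ sInf_lagrangian_le hCc hfc hgc (fun j => lam j) hzbar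
  have hsum : ∑ j, lam j * g j zbar ≤ -(υ * ∑ j, lam j) :=
    sum_mul_le_neg_mul_sum _ (fun j _ => hlam0 j) fun j _ => hυ.2 ⟨j, rfl⟩
  linarith

/-- Under the Slater condition, any `λ ⪰ 0` with `q(λ) ≥ q(λ*) - δ` satisfies
`υ ∑_j λ_j ≤ f(z̄) - q(λ*) + δ` where `υ = min_j (-g_j(z̄)) > 0`. -/
theorem bounded_multiplier_sum {n m : ℕ} (C : Set (EuclideanSpace ℝ (Fin n)))
    (hCc : IsCompact C) (hCconv : Convex ℝ C) (hCne : C.Nonempty)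
    (f : EuclideanSpace ℝ (Fin n) → ℝ)
    (hf : ConvexOn ℝ C f) (hfc : ContinuousOn f C)
    (g : Fin m → EuclideanSpace ℝ (Fin n) → ℝ)
    (hg : ∀ j, ConvexOn ℝ C (g j)) (hgc : ∀ j, ContinuousOn (g j) C)
    (q : EuclideanSpace ℝ (Fin m) → ℝ)
    (hq : ∀ lam, q lam = sInf ((fun w => f w + ∑ j, lam j * g j w) '' C))
    (lamstar : EuclideanSpace ℝ (Fin m)) (hlamstar0 : ∀ j, 0 ≤ lamstar j)
    (hlamstar : ∀ lam : EuclideanSpace ℝ (Fin m), (∀ j, 0 ≤ lam j) → q lam ≤ q lamstar)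
    (zbar : EuclideanSpace ℝ (Fin n)) (hzbar : zbar ∈ C)
    (hslater : ∀ j, g j zbar < 0)
    (υ : ℝ) (hυpos : 0 < υ) (hυ : IsLeast (Set.range fun j => -(g j zbar)) υ)
    (δ : ℝ) (hδ : 0 ≤ δ)
    (lam : EuclideanSpace ℝ (Fin m)) (hlam0 : ∀ j, 0 ≤ lam j)
    (hlamq : q lamstar - δ ≤ q lam) :
    υ * ∑ j, lam j ≤ f zbar - q lamstar + δ :=
  bounded_multiplier_sum_general C hCc f hfc g hgc q hq lamstar zbar hzbar υ hυ δ lam hlam0 hlamq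
end

section
/- Consider the truncated dual update λ_{k+1} = [λ_k + α g(z_{k+1})]^{[0,λ̄]} (coordinatewise projection onto [0, λ̄]^m) with α > 0, λ̄ ≥ max_j λ*_j, λ_1 ∈ [0,λ̄]^m, where {z_k} is a sequence in C with L(z_{k+1}, λ_k) − q(λ_k) ≤ 2ε for all k. Then with z°_k = (1/k)∑_{i=1}^k z_{i+1} and λ°_k = (1/k)∑_{i=1}^k λ_i, we have |L(z°_k, λ°_k) − f*| ≤ 2ε + (α/2)·m·ḡ² + m·λ̄²/(α k), where ḡ = max_{z∈C} ‖g(z)‖_∞ and f* = q(λ*) is the optimal value. -/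
/-!
The averages form an approximate saddle point of the Lagrangian. Jensen's inequality in `z`
bounds `L(z°, λ°)` above, and the concavity of `q` bounds it below, each time by the averaged
values `L(z_{i+1}, λ_i)` (which are within `2ε` of `q(λ_i) ≤ q(λ*)`) plus the dual regret
`(1/k) ∑ ⟨g(z_{i+1}), ν - λ_i⟩` against `ν = λ°` resp. `ν = λ*`. Both comparators lie in the
box `[0, λ̄]^m`, onto which the projection is nonexpansive, so `‖λ_i - ν‖²` telescopes and the
regret is at most `α m ḡ² / 2 + m λ̄² / (2 α k)`.
-/

open Finset

section ProjectedSubgradient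

lemma sq_clamp_sub_le {t y b : ℝ} (hy : y ∈ Set.Icc 0 b) :
    (min (max t 0) b - y) ^ 2 ≤ (t - y) ^ 2 := by
  obtain ⟨hy0, hyb⟩ := hy
  rcases le_total t 0 with ht | ht
  · rw [max_eq_right ht, min_eq_left (hy0.trans hyb)]
    nlinarith
  · rw [max_eq_left ht]
    rcases le_total t b with htb | hbt
    · rw [min_eq_left htb]
    · rw [min_eq_right hbt]
      nlinarith

lemma sq_clamp_step_sub_le {x y d α b G : ℝ} (hy : y ∈ Set.Icc 0 b) (hd : |d| ≤ G) :
    (min (max (x + α * d) 0) b - y) ^ 2 ≤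
      (x - y) ^ 2 - 2 * α * (d * (y - x)) + α ^ 2 * G ^ 2 := by
  have hd2 : d ^ 2 ≤ G ^ 2 := sq_le_sq' (abs_le.mp hd).1 (abs_le.mp hd).2
  nlinarith [sq_clamp_sub_le (t := x + α * d) hy, mul_le_mul_of_nonneg_left hd2 (sq_nonneg α)]

variable {ι : Type*} {Λ d : ℕ → ι → ℝ} {α b G : ℝ}

lemma clamp_iterate_mem_Icc (h₁ : ∀ j, Λ 1 j ∈ Set.Icc 0 b)
    (hΛ : ∀ k ≥ 1, ∀ j, Λ (k + 1) j = min (max (Λ k j + α * d k j) 0) b) :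
    ∀ k ≥ 1, ∀ j, Λ k j ∈ Set.Icc 0 b := by
  intro k hk
  induction k, hk using Nat.le_induction with
  | base => exact h₁
  | succ k hk ih =>
    intro j
    rw [hΛ k hk j]
    exact ⟨le_min (le_max_right _ _) ((ih j).1.trans (ih j).2), min_le_right _ _⟩

variable [Fintype ι]

lemma sum_sq_sub_succ_le (hΛ : ∀ k ≥ 1, ∀ j, Λ (k + 1) j = min (max (Λ k j + α * d k j) 0) b)
    (hd : ∀ k ≥ 1, ∀ j, |d k j| ≤ G) {ν : ι → ℝ} (hν : ∀ j, ν j ∈ Set.Icc 0 b) {k : ℕ}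
    (hk : 1 ≤ k) :
    ∑ j, (Λ (k + 1) j - ν j) ^ 2 ≤
      ∑ j, (Λ k j - ν j) ^ 2 - 2 * α * ∑ j, d k j * (ν j - Λ k j)
        + Fintype.card ι * (α ^ 2 * G ^ 2) := by
  calc ∑ j, (Λ (k + 1) j - ν j) ^ 2
      ≤ ∑ j, ((Λ k j - ν j) ^ 2 - 2 * α * (d k j * (ν j - Λ k j)) + α ^ 2 * G ^ 2) :=
        sum_le_sum fun j _ => hΛ k hk j ▸ sq_clamp_step_sub_le (hν j) (hd k hk j)
    _ = _ := by
        simp only [sum_add_distrib, sum_sub_distrib, ← mul_sum, sum_const, card_univ, nsmul_eq_mul]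
        ring

lemma two_mul_sum_add_sum_sq_sub_le
    (hΛ : ∀ k ≥ 1, ∀ j, Λ (k + 1) j = min (max (Λ k j + α * d k j) 0) b)
    (hd : ∀ k ≥ 1, ∀ j, |d k j| ≤ G) {ν : ι → ℝ} (hν : ∀ j, ν j ∈ Set.Icc 0 b) (K : ℕ) :
    2 * α * ∑ i ∈ Icc 1 K, ∑ j, d i j * (ν j - Λ i j) + ∑ j, (Λ (K + 1) j - ν j) ^ 2 ≤
      ∑ j, (Λ 1 j - ν j) ^ 2 + K * (Fintype.card ι * (α ^ 2 * G ^ 2)) := by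
  induction K with
  | zero => simp
  | succ K ih =>
    rw [sum_Icc_succ_top (by omega), mul_add]
    push_cast
    linarith [sum_sq_sub_succ_le hΛ hd hν (k := K + 1) (by omega)]

lemma inv_mul_sum_mul_sub_le (hα : 0 < α) {K : ℕ} (hK : 0 < K) (h₁ : ∀ j, Λ 1 j ∈ Set.Icc 0 b)
    (hΛ : ∀ k ≥ 1, ∀ j, Λ (k + 1) j = min (max (Λ k j + α * d k j) 0) b)
    (hd : ∀ k ≥ 1, ∀ j, |d k j| ≤ G) {ν : ι → ℝ} (hν : ∀ j, ν j ∈ Set.Icc 0 b) :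
    (K : ℝ)⁻¹ * ∑ i ∈ Icc 1 K, ∑ j, d i j * (ν j - Λ i j) ≤
      α / 2 * Fintype.card ι * G ^ 2 + Fintype.card ι * b ^ 2 / (2 * α * K) := by
  have h₁ν : ∑ j, (Λ 1 j - ν j) ^ 2 ≤ Fintype.card ι * b ^ 2 := by
    calc ∑ j, (Λ 1 j - ν j) ^ 2 ≤ ∑ _j : ι, b ^ 2 := sum_le_sum fun j _ => by
          obtain ⟨h0, hb⟩ := h₁ j
          obtain ⟨h0', hb'⟩ := hν j
          nlinarith
      _ = _ := by simp
  have hK₀ : (0 : ℝ) < K := by exact_mod_cast hK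
  have hbound : K * (α / 2 * Fintype.card ι * G ^ 2 + Fintype.card ι * b ^ 2 / (2 * α * K)) =
      (Fintype.card ι * b ^ 2 + K * (Fintype.card ι * (α ^ 2 * G ^ 2))) / (2 * α) := by
    field_simp
    ring
  rw [inv_mul_le_iff₀ hK₀, hbound, le_div_iff₀ (by positivity)]
  linarith [two_mul_sum_add_sum_sq_sub_le hΛ hd hν K,
    sum_nonneg fun j (_ : j ∈ univ) => sq_nonneg (Λ (K + 1) j - ν j)]

end ProjectedSubgradient

section Lagrangian

variable {E ι : Type*} [Fintype ι] {C : Set E} {f : E → ℝ} {g : ι → E → ℝ}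

def lagrangian (f : E → ℝ) (g : ι → E → ℝ) (μ : ι → ℝ) (x : E) : ℝ :=
  f x + ∑ j, μ j * g j x

noncomputable def dualFunction (C : Set E) (f : E → ℝ) (g : ι → E → ℝ) (μ : ι → ℝ) : ℝ :=
  sInf (lagrangian f g μ '' C)

lemma lagrangian_eq_add_sum (μ ν : ι → ℝ) (x : E) :
    lagrangian f g μ x = lagrangian f g ν x + ∑ j, g j x * (μ j - ν j) := by
  simp only [lagrangian, add_assoc, ← sum_add_distrib]
  congr 1
  exact sum_congr rfl fun j _ => by ring

lemma lagrangian_sum_smul {κ : Type*} {s : Finset κ} {w : κ → ℝ} (hw₁ : ∑ i ∈ s, w i = 1)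
    (μ : κ → ι → ℝ) (x : E) :
    lagrangian f g (∑ i ∈ s, w i • μ i) x = ∑ i ∈ s, w i * lagrangian f g (μ i) x := by
  simp only [lagrangian, mul_add, sum_add_distrib, ← sum_mul, hw₁, one_mul, mul_sum,
    Finset.sum_apply, Pi.smul_apply, smul_eq_mul]
  rw [sum_comm]
  congr 1
  exact sum_congr rfl fun i _ => by rw [sum_mul]; exact sum_congr rfl fun j _ => by ring

lemma le_dualFunction (hC : C.Nonempty) {μ : ι → ℝ} {a : ℝ}
    (h : ∀ x ∈ C, a ≤ lagrangian f g μ x) : a ≤ dualFunction C f g μ :=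
  le_csInf (hC.image _) (Set.forall_mem_image.mpr h)

lemma dualFunction_le_lagrangian [TopologicalSpace E] (hC : IsCompact C) (hf : ContinuousOn f C)
    (hg : ∀ j, ContinuousOn (g j) C) (μ : ι → ℝ) {x : E} (hx : x ∈ C) :
    dualFunction C f g μ ≤ lagrangian f g μ x :=
  csInf_le (hC.bddBelow_image
    (hf.add (continuousOn_finsetSum _ fun j _ => continuousOn_const.mul (hg j))))
    (Set.mem_image_of_mem _ hx)

lemma sum_mul_dualFunction_le [TopologicalSpace E] {κ : Type*} {s : Finset κ} {w : κ → ℝ}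
    {μ : κ → ι → ℝ} (hC : IsCompact C) (hf : ContinuousOn f C)
    (hg : ∀ j, ContinuousOn (g j) C) (hCne : C.Nonempty) (hw₀ : ∀ i ∈ s, 0 ≤ w i)
    (hw₁ : ∑ i ∈ s, w i = 1) :
    ∑ i ∈ s, w i * dualFunction C f g (μ i) ≤ dualFunction C f g (∑ i ∈ s, w i • μ i) :=
  le_dualFunction hCne fun y hy => (lagrangian_sum_smul hw₁ μ y).symm ▸
    sum_le_sum fun i hi =>
      mul_le_mul_of_nonneg_left (dualFunction_le_lagrangian hC hf hg _ hy) (hw₀ i hi)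

lemma convexOn_lagrangian [AddCommGroup E] [Module ℝ E] (hC : Convex ℝ C) (hf : ConvexOn ℝ C f)
    (hg : ∀ j, ConvexOn ℝ C (g j)) {μ : ι → ℝ} (hμ : ∀ j, 0 ≤ μ j) :
    ConvexOn ℝ C (lagrangian f g μ) := by
  have hsum : ConvexOn ℝ C (∑ j, μ j • g j) :=
    sum_induction _ (ConvexOn ℝ C) (fun _ _ => ConvexOn.add) (convexOn_const 0 hC)
      fun j _ => (hg j).smul (hμ j)
  have hL : lagrangian f g μ = f + ∑ j, μ j • g j := by
    ext x
    simp [lagrangian]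
  exact hL ▸ hf.add hsum

end Lagrangian

section Averaging

variable {E ι κ : Type*} [Fintype ι] [AddCommGroup E] [Module ℝ E] {C : Set E} {f : E → ℝ}
  {g : ι → E → ℝ} {s : Finset κ} {w : κ → ℝ} {x : κ → E} {μ : κ → ι → ℝ}

lemma lagrangian_average_le (hC : Convex ℝ C) (hf : ConvexOn ℝ C f)
    (hg : ∀ j, ConvexOn ℝ C (g j)) (hw₀ : ∀ i ∈ s, 0 ≤ w i) (hw₁ : ∑ i ∈ s, w i = 1)
    (hx : ∀ i ∈ s, x i ∈ C) {V : ℝ} (hV : ∀ i ∈ s, lagrangian f g (μ i) (x i) ≤ V)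
    {ν : ι → ℝ} (hν : ∀ j, 0 ≤ ν j) :
    lagrangian f g ν (∑ i ∈ s, w i • x i) ≤
      V + ∑ i ∈ s, w i * ∑ j, g j (x i) * (ν j - μ i j) := by
  calc lagrangian f g ν (∑ i ∈ s, w i • x i)
      ≤ ∑ i ∈ s, w i * lagrangian f g ν (x i) :=
        (convexOn_lagrangian hC hf hg hν).map_sum_le hw₀ hw₁ hx
    _ ≤ ∑ i ∈ s, w i * (V + ∑ j, g j (x i) * (ν j - μ i j)) :=
        sum_le_sum fun i hi => mul_le_mul_of_nonneg_left
          (by rw [lagrangian_eq_add_sum ν (μ i)]; linarith [hV i hi]) (hw₀ i hi)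
    _ = _ := by simp only [mul_add, sum_add_distrib, ← sum_mul, hw₁, one_mul]

variable [TopologicalSpace E]

lemma le_lagrangian_average (hC : IsCompact C) (hCconv : Convex ℝ C) (hf : ContinuousOn f C)
    (hg : ∀ j, ContinuousOn (g j) C) (hw₀ : ∀ i ∈ s, 0 ≤ w i) (hw₁ : ∑ i ∈ s, w i = 1)
    (hx : ∀ i ∈ s, x i ∈ C) {δ : ℝ}
    (hδ : ∀ i ∈ s, lagrangian f g (μ i) (x i) - dualFunction C f g (μ i) ≤ δ) (ν : ι → ℝ) :
    dualFunction C f g ν - δ - ∑ i ∈ s, w i * ∑ j, g j (x i) * (ν j - μ i j) ≤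
      lagrangian f g (∑ i ∈ s, w i • μ i) (∑ i ∈ s, w i • x i) := by
  have hxC : ∑ i ∈ s, w i • x i ∈ C := hCconv.sum_mem hw₀ hw₁ hx
  calc dualFunction C f g ν - δ - ∑ i ∈ s, w i * ∑ j, g j (x i) * (ν j - μ i j)
      = ∑ i ∈ s, w i * (dualFunction C f g ν - δ - ∑ j, g j (x i) * (ν j - μ i j)) := by
        simp only [mul_sub, sum_sub_distrib, ← sum_mul, hw₁, one_mul]
    _ ≤ ∑ i ∈ s, w i * dualFunction C f g (μ i) :=
        sum_le_sum fun i hi => mul_le_mul_of_nonneg_left (by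
          have hν := dualFunction_le_lagrangian hC hf hg ν (hx i hi)
          rw [lagrangian_eq_add_sum ν (μ i)] at hν
          linarith [hδ i hi]) (hw₀ i hi)
    _ ≤ dualFunction C f g (∑ i ∈ s, w i • μ i) :=
        sum_mul_dualFunction_le hC hf hg ⟨_, hxC⟩ hw₀ hw₁
    _ ≤ lagrangian f g (∑ i ∈ s, w i • μ i) (∑ i ∈ s, w i • x i) :=
        dualFunction_le_lagrangian hC hf hg _ hxC

end Averaging

theorem lagrangian_of_averages_general {n m : ℕ} (C : Set (EuclideanSpace ℝ (Fin n)))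
    (hCc : IsCompact C) (hCconv : Convex ℝ C)
    (f : EuclideanSpace ℝ (Fin n) → ℝ)
    (hf : ConvexOn ℝ C f) (hfc : ContinuousOn f C)
    (g : Fin m → EuclideanSpace ℝ (Fin n) → ℝ)
    (hg : ∀ j, ConvexOn ℝ C (g j)) (hgc : ∀ j, ContinuousOn (g j) C)
    (q : EuclideanSpace ℝ (Fin m) → ℝ)
    (hq : ∀ lam, q lam = sInf ((fun w => f w + ∑ j, lam j * g j w) '' C))
    (lamstar : EuclideanSpace ℝ (Fin m)) (hlamstar0 : ∀ j, 0 ≤ lamstar j)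
    (hlamstar : ∀ lam : EuclideanSpace ℝ (Fin m), (∀ j, 0 ≤ lam j) → q lam ≤ q lamstar)
    (ε α lambar gbar : ℝ) (hα : 0 < α)
    (hlambar : ∀ j, lamstar j ≤ lambar)
    (hgbar : ∀ w ∈ C, ∀ j, |g j w| ≤ gbar)
    (z : ℕ → EuclideanSpace ℝ (Fin n)) (hzC : ∀ k, z k ∈ C)
    (lam : ℕ → EuclideanSpace ℝ (Fin m))
    (hlam1 : ∀ j, lam 1 j ∈ Set.Icc (0:ℝ) lambar)
    (hupd : ∀ k ≥ 1, ∀ j,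
      lam (k + 1) j = min (max (lam k j + α * g j (z (k + 1))) 0) lambar)
    (hdescent : ∀ k ≥ 1,
      (f (z (k + 1)) + ∑ j, lam k j * g j (z (k + 1))) - q (lam k) ≤ 2 * ε) :
    ∀ k : ℕ, k ≥ 1 →
      |(f ((k:ℝ)⁻¹ • ∑ i ∈ Finset.Icc 1 k, z (i + 1))
          + ∑ j, ((k:ℝ)⁻¹ • ∑ i ∈ Finset.Icc 1 k, lam i) j
              * g j ((k:ℝ)⁻¹ • ∑ i ∈ Finset.Icc 1 k, z (i + 1)))
        - q lamstar|
      ≤ 2 * ε + α / 2 * m * gbar ^ 2 + m * lambar ^ 2 / (α * k) := by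
  intro k hk
  have hq' : ∀ μ, q μ = dualFunction C f g μ := hq
  have hw₀ : ∀ i ∈ Icc 1 k, 0 ≤ (k : ℝ)⁻¹ := fun _ _ => by positivity
  have hw₁ : ∑ _i ∈ Icc 1 k, (k : ℝ)⁻¹ = 1 := by simp [Nat.one_le_iff_ne_zero.mp hk]
  have hbox := clamp_iterate_mem_Icc (Λ := fun i => ⇑(lam i)) (d := fun i j => g j (z (i + 1)))
    hlam1 hupd
  have hregret {ν : Fin m → ℝ} (hν : ∀ j, ν j ∈ Set.Icc 0 lambar) :=
    inv_mul_sum_mul_sub_le (Λ := fun i => ⇑(lam i)) (d := fun i j => g j (z (i + 1))) hα hk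
      hlam1 hupd (fun i _ j => hgbar _ (hzC _) j) hν
  have hμ : ∀ j, (∑ i ∈ Icc 1 k, (k : ℝ)⁻¹ • ⇑(lam i)) j ∈ Set.Icc 0 lambar := fun j => by
    simpa using (convex_Icc 0 lambar).sum_mem hw₀ hw₁ fun i hi => hbox i (mem_Icc.mp hi).1 j
  have hgap : ∀ i ∈ Icc 1 k,
      lagrangian f g (lam i) (z (i + 1)) - dualFunction C f g (lam i) ≤ 2 * ε :=
    fun i hi => hq' (lam i) ▸ hdescent i (mem_Icc.mp hi).1
  have hdual : ∀ i ∈ Icc 1 k, dualFunction C f g (lam i) ≤ dualFunction C f g lamstar :=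
    fun i hi => hq' (lam i) ▸ hq' lamstar ▸
      hlamstar (lam i) fun j => (hbox i (mem_Icc.mp hi).1 j).1
  have hupper := lagrangian_average_le (μ := fun i => ⇑(lam i)) hCconv hf hg hw₀ hw₁
    (fun i _ => hzC (i + 1)) (V := dualFunction C f g lamstar + 2 * ε)
    (fun i hi => by linarith [hgap i hi, hdual i hi]) fun j => (hμ j).1
  have hlower := le_lagrangian_average (μ := fun i => ⇑(lam i)) hCc hCconv hfc hgc hw₀ hw₁
    (fun i _ => hzC (i + 1)) hgap lamstar
  have hweaken : m * lambar ^ 2 / (2 * α * k) ≤ m * lambar ^ 2 / (α * k) := by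
    gcongr
    linarith
  simp only [← mul_sum, Fintype.card_fin] at hupper hlower hregret
  simp only [smul_sum, WithLp.ofLp_sum, WithLp.ofLp_smul]
  change |lagrangian f g _ _ - _| ≤ _
  rw [abs_le, hq']
  constructor
  · linarith [hregret fun j => ⟨hlamstar0 j, hlambar j⟩]
  · linarith [hregret hμ]

/-- Lagrangian of Averages: with the truncated dual update and a sequence `{z_k}` that
approximately minimises the Lagrangian, the Lagrangian evaluated at the running averages
is within `2ε + (α/2) m ḡ² + m λ̄²/(α k)` of the optimal value `f* = q(λ*)`. -/
theorem lagrangian_of_averages {n m : ℕ} (C : Set (EuclideanSpace ℝ (Fin n)))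
    (hCc : IsCompact C) (hCconv : Convex ℝ C) (hCne : C.Nonempty)
    (f : EuclideanSpace ℝ (Fin n) → ℝ)
    (hf : ConvexOn ℝ C f) (hfc : ContinuousOn f C)
    (g : Fin m → EuclideanSpace ℝ (Fin n) → ℝ)
    (hg : ∀ j, ConvexOn ℝ C (g j)) (hgc : ∀ j, ContinuousOn (g j) C)
    (q : EuclideanSpace ℝ (Fin m) → ℝ)
    (hq : ∀ lam, q lam = sInf ((fun w => f w + ∑ j, lam j * g j w) '' C))
    (lamstar : EuclideanSpace ℝ (Fin m)) (hlamstar0 : ∀ j, 0 ≤ lamstar j)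
    (hlamstar : ∀ lam : EuclideanSpace ℝ (Fin m), (∀ j, 0 ≤ lam j) → q lam ≤ q lamstar)
    (ε α lambar gbar : ℝ) (hε : 0 ≤ ε) (hα : 0 < α)
    (hlambar : ∀ j, lamstar j ≤ lambar)
    (hgbar : ∀ w ∈ C, ∀ j, |g j w| ≤ gbar)
    (z : ℕ → EuclideanSpace ℝ (Fin n)) (hzC : ∀ k, z k ∈ C)
    (lam : ℕ → EuclideanSpace ℝ (Fin m))
    (hlam1 : ∀ j, lam 1 j ∈ Set.Icc (0:ℝ) lambar)
    (hupd : ∀ k ≥ 1, ∀ j,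
      lam (k + 1) j = min (max (lam k j + α * g j (z (k + 1))) 0) lambar)
    (hdescent : ∀ k ≥ 1,
      (f (z (k + 1)) + ∑ j, lam k j * g j (z (k + 1))) - q (lam k) ≤ 2 * ε) :
    ∀ k : ℕ, k ≥ 1 →
      |(f ((k:ℝ)⁻¹ • ∑ i ∈ Finset.Icc 1 k, z (i + 1))
          + ∑ j, ((k:ℝ)⁻¹ • ∑ i ∈ Finset.Icc 1 k, lam i) j
              * g j ((k:ℝ)⁻¹ • ∑ i ∈ Finset.Icc 1 k, z (i + 1)))
        - q lamstar|
      ≤ 2 * ε + α / 2 * m * gbar ^ 2 + m * lambar ^ 2 / (α * k) :=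
  lagrangian_of_averages_general C hCc hCconv f hf hfc g hg hgc q hq lamstar hlamstar0 hlamstar ε α
    lambar gbar hα hlambar hgbar z hzC lam hlam1 hupd hdescent
end

section
/- Consider two real sequences given by truncated recursions λ_{k+1} = [λ_k + δ_k]^{[0,λ̄]} and λ̃_{k+1} = [λ̃_k + δ̃_k]^{[0,λ̄]} with λ_1 = λ̃_1 ∈ [0,λ̄]. If |∑_{i=1}^k (δ_i − δ̃_i)| ≤ ε for all k ≥ 1, then |λ_k − λ̃_k| ≤ 2ε for all k ≥ 1. -/
/-!
Write `e k = λ_k - λ̃_k` and `T k = ∑_{1 ≤ i < k} (δ_i - δ̃_i)`. Clamping to an interval is monotone and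
1-Lipschitz, so `e (k+1)` lies between `0` and `e k + δ_k - δ̃_k`. Hence `e (k+1) - T (k+1)` lies
between `-T (k+1)` and `e k - T k`, and by induction `|e k - T k| ≤ ε`; together with `|T k| ≤ ε`
this gives `|e k| ≤ 2ε`.
-/

open Finset

lemma min_max_sub_min_max_mem (l u a b : ℝ) :
    min 0 (a - b) ≤ min (max a l) u - min (max b l) u ∧
      min (max a l) u - min (max b l) u ≤ max 0 (a - b) := by
  constructor <;> · simp only [min_def, max_def]; split_ifs <;> linarith

lemma abs_sub_le_of_min_le_of_le_max {u s v ε : ℝ} (hlo : min 0 (u + s) ≤ v)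
    (hhi : v ≤ max 0 (u + s)) (hu : |u| ≤ ε) (hs : |s| ≤ ε) : |v - s| ≤ ε := by
  rw [abs_le] at hu hs ⊢
  rcases le_total 0 (u + s) with h | h
  · rw [min_eq_left h] at hlo
    rw [max_eq_right h] at hhi
    constructor <;> linarith
  · rw [min_eq_right h] at hlo
    rw [max_eq_left h] at hhi
    constructor <;> linarith

lemma abs_sub_sum_Ico_le_of_min_le_of_le_max {e d : ℕ → ℝ} {ε : ℝ} (h₁ : e 1 = 0)
    (hstep : ∀ k ≥ 1, min 0 (e k + d k) ≤ e (k + 1) ∧ e (k + 1) ≤ max 0 (e k + d k))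
    (hsum : ∀ k, |∑ i ∈ Ico 1 k, d i| ≤ ε) :
    ∀ k ≥ 1, |e k - ∑ i ∈ Ico 1 k, d i| ≤ ε := by
  intro k hk
  induction k, hk using Nat.le_induction with
  | base => simpa [h₁] using hsum 1
  | succ k hk ih =>
    have hnext := hsum (k + 1)
    rw [sum_Ico_succ_top hk] at hnext ⊢
    obtain ⟨hlo, hhi⟩ := hstep k hk
    rw [show e k + d k = (e k - ∑ i ∈ Ico 1 k, d i) + (∑ i ∈ Ico 1 k, d i + d k) by ring]
      at hlo hhi
    exact abs_sub_le_of_min_le_of_le_max hlo hhi ih hnext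

lemma abs_le_two_mul_of_min_le_of_le_max {e d : ℕ → ℝ} {ε : ℝ} (h₁ : e 1 = 0)
    (hstep : ∀ k ≥ 1, min 0 (e k + d k) ≤ e (k + 1) ∧ e (k + 1) ≤ max 0 (e k + d k))
    (hsum : ∀ k, |∑ i ∈ Ico 1 k, d i| ≤ ε) :
    ∀ k ≥ 1, |e k| ≤ 2 * ε := fun k hk =>
  calc |e k| = |(e k - ∑ i ∈ Ico 1 k, d i) + ∑ i ∈ Ico 1 k, d i| := by rw [sub_add_cancel]
    _ ≤ |e k - ∑ i ∈ Ico 1 k, d i| + |∑ i ∈ Ico 1 k, d i| := abs_add_le _ _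
    _ ≤ ε + ε := add_le_add (abs_sub_sum_Ico_le_of_min_le_of_le_max h₁ hstep hsum k hk) (hsum k)
    _ = 2 * ε := by ring

theorem truncated_recursions_close_general (lambar ε : ℝ) (hε : 0 ≤ ε)
    (δ δ' : ℕ → ℝ) (lam lam' : ℕ → ℝ)
    (hinit : lam 1 = lam' 1)
    (hupd : ∀ k ≥ 1, lam (k + 1) = min (max (lam k + δ k) 0) lambar)
    (hupd' : ∀ k ≥ 1, lam' (k + 1) = min (max (lam' k + δ' k) 0) lambar)
    (hsum : ∀ k : ℕ, k ≥ 1 → |∑ i ∈ Finset.Icc 1 k, (δ i - δ' i)| ≤ ε) :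
    ∀ k ≥ 1, |lam k - lam' k| ≤ 2 * ε := by
  have hsumIco : ∀ k, |∑ i ∈ Ico 1 k, (δ i - δ' i)| ≤ ε := by
    rintro (_ | _ | k)
    · simpa using hε
    · simpa using hε
    · simpa only [Ico_add_one_right_eq_Icc] using hsum (k + 1) (by omega)
  have hstep : ∀ k ≥ 1, min 0 ((lam k - lam' k) + (δ k - δ' k)) ≤ lam (k + 1) - lam' (k + 1) ∧
      lam (k + 1) - lam' (k + 1) ≤ max 0 ((lam k - lam' k) + (δ k - δ' k)) := by
    intro k hk
    rw [hupd k hk, hupd' k hk, show lam k - lam' k + (δ k - δ' k) =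
      (lam k + δ k) - (lam' k + δ' k) by ring]
    exact min_max_sub_min_max_mem 0 lambar _ _
  exact abs_le_two_mul_of_min_le_of_le_max (e := fun k => lam k - lam' k) (sub_eq_zero.2 hinit)
    hstep hsumIco

/-- Two truncated recursions with the same initial value whose increments have uniformly
close partial sums stay within `2ε` of each other. -/
theorem truncated_recursions_close (lambar ε : ℝ) (hlambar : 0 < lambar) (hε : 0 ≤ ε)
    (δ δ' : ℕ → ℝ) (lam lam' : ℕ → ℝ)
    (hinit : lam 1 = lam' 1) (hinitm : lam 1 ∈ Set.Icc 0 lambar)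
    (hupd : ∀ k ≥ 1, lam (k + 1) = min (max (lam k + δ k) 0) lambar)
    (hupd' : ∀ k ≥ 1, lam' (k + 1) = min (max (lam' k + δ' k) 0) lambar)
    (hsum : ∀ k : ℕ, k ≥ 1 → |∑ i ∈ Finset.Icc 1 k, (δ i - δ' i)| ≤ ε) :
    ∀ k ≥ 1, |lam k - lam' k| ≤ 2 * ε :=
  truncated_recursions_close_general lambar ε hε δ δ' lam lam' hinit hupd hupd' hsum
end

section
/- Let A ∈ R^{m×n}, let {x_k} be a sequence in a finite set D ⊂ R^n, let z_{k+1} = (1−β)z_k + βx_k with z_1 ∈ C = conv(D), β ∈ (0,1). Consider λ_{k+1} = [λ_k + α(Az_{k+1} − b)]^{[0,λ̄]} and λ̃_{k+1} = [λ̃_k + α(Ax_k − b_k)]^{[0,λ̄]} with λ̃_1 = λ_1, where {b_k} satisfies |∑_{i=1}^k (b_i^{(j)} − b^{(j)})| ≤ σ₂ for all j and k. Then ‖λ̃_k − λ_k‖₂ ≤ 2mα(σ₁/β + σ₂) for all k ≥ 1, where σ₁ = 2·max_{z∈C} ‖Az‖_∞. -/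
/-!
In each coordinate both multiplier sequences iterate the same monotone nonexpansive clamp to
`[0, λ̄]`, so their difference stays within `M` of the cumulative difference of their increments
as long as those partial sums are bounded by `M`, and is then itself at most `2M`. The increments
differ by `α (A x_i - A z_{i+1})` and `α (b - b_i)`. Since `z_{i+1} - z_i = β (x_i - z_i)`, the
first kind telescopes to `α (1 - β) / β · A (z_{k+1} - z_1)`, at most `α σ₁ / β` because the `z_k`
stay in `C`; the second sums to at most `α σ₂` by assumption. A vector with `m` coordinates
bounded by `2M` has Euclidean norm at most `2 m M`.
-/

open Finset

section ConvexRecursion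

variable {𝕜 E : Type*} [Field 𝕜] [AddCommGroup E] [Module 𝕜 E]
  {x z : ℕ → E} {β : 𝕜}

lemma sub_eq_div_smul_sub_of_eq_convex_combination {xk zk zk' : E} (hβ : β ≠ 0)
    (h : zk' = (1 - β) • zk + β • xk) : xk - zk' = ((1 - β) / β) • (zk' - zk) := by
  subst h
  match_scalars
  · field_simp
  · field_simp
    ring

lemma sum_Icc_sub_eq_div_smul_sub (hβ : β ≠ 0)
    (hz : ∀ k ≥ 1, z (k + 1) = (1 - β) • z k + β • x k) (k : ℕ) :
    ∑ i ∈ Icc 1 k, (x i - z (i + 1)) = ((1 - β) / β) • (z (k + 1) - z 1) := by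
  induction k with
  | zero => simp
  | succ k ih =>
    rw [sum_Icc_succ_top (by omega), ih,
      sub_eq_div_smul_sub_of_eq_convex_combination hβ (hz (k + 1) (by omega)), ← smul_add]
    abel_nf

lemma mem_of_eq_convex_combination [LinearOrder 𝕜] [IsStrictOrderedRing 𝕜] {s : Set E}
    (hs : Convex 𝕜 s) (hx : ∀ k, x k ∈ s) (hz1 : z 1 ∈ s) (hβ : β ∈ Set.Icc 0 1)
    (hz : ∀ k ≥ 1, z (k + 1) = (1 - β) • z k + β • x k) : ∀ k ≥ 1, z k ∈ s := by
  intro k hk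
  induction k, hk using Nat.le_induction with
  | base => exact hz1
  | succ k hk ih =>
    rw [hz k hk]
    exact hs ih (hx k) (sub_nonneg.2 hβ.2) hβ.1 (sub_add_cancel 1 β)

end ConvexRecursion

lemma abs_sum_Icc_sub_le_div {E : Type*} [AddCommGroup E] [Module ℝ E] {s : Set E}
    (hs : Convex ℝ s) {ℓ : E →ₗ[ℝ] ℝ} {σ : ℝ} (hℓ : ∀ w ∈ s, |ℓ w| ≤ σ / 2)
    {x z : ℕ → E} {β : ℝ} (hx : ∀ k, x k ∈ s) (hz1 : z 1 ∈ s) (hβ : β ∈ Set.Ioo 0 1)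
    (hz : ∀ k ≥ 1, z (k + 1) = (1 - β) • z k + β • x k) (k : ℕ) :
    |∑ i ∈ Icc 1 k, (ℓ (x i) - ℓ (z (i + 1)))| ≤ σ / β := by
  obtain ⟨hβ0, hβ1⟩ := hβ
  have hzs := mem_of_eq_convex_combination hs hx hz1 ⟨hβ0.le, hβ1.le⟩ hz
  have hdiff : |ℓ (z (k + 1)) - ℓ (z 1)| ≤ σ :=
    (abs_sub _ _).trans (by linarith [hℓ _ (hzs (k + 1) (by omega)), hℓ _ hz1])
  have hcoef : |(1 - β) / β| ≤ 1 / β := by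
    rw [abs_of_nonneg (div_nonneg (by linarith) hβ0.le)]
    gcongr
    linarith
  simp_rw [← map_sub, ← map_sum, sum_Icc_sub_eq_div_smul_sub hβ0.ne' hz, map_smul, map_sub,
    smul_eq_mul, abs_mul]
  calc |(1 - β) / β| * |ℓ (z (k + 1)) - ℓ (z 1)| ≤ 1 / β * σ :=
        mul_le_mul hcoef hdiff (abs_nonneg _) (by positivity)
    _ = σ / β := one_div_mul_eq_div β σ

section ProjectedRecursion

variable {f : ℝ → ℝ} {u v d e : ℕ → ℝ} {M : ℝ}

lemma Monotone.sub_le_max_sub_zero (hmono : Monotone f) (hlip : LipschitzWith 1 f)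
    (a c : ℝ) : f a - f c ≤ max (a - c) 0 := by
  rcases le_total a c with h | h
  · exact (sub_nonpos.2 (hmono h)).trans (le_max_right _ _)
  · have := hlip.le_add_mul a c
    rw [Real.dist_eq, abs_of_nonneg (sub_nonneg.2 h)] at this
    exact le_max_of_le_left (by push_cast at this; linarith)

/-- A monotone nonexpansive step moves `u - v` by at most the positive part of the change of its
input; the clipped branch `0` stays below `M ± S` because the partial sums satisfy `|S| ≤ M`. -/
lemma abs_sub_sub_sum_Icc_le (hmono : Monotone f) (hlip : LipschitzWith 1 f) (h1 : u 1 = v 1)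
    (hu : ∀ k ≥ 1, u (k + 1) = f (u k + d k)) (hv : ∀ k ≥ 1, v (k + 1) = f (v k + e k))
    (hS : ∀ k ≥ 1, |∑ i ∈ Icc 1 k, (d i - e i)| ≤ M) (k : ℕ) :
    |u (k + 1) - v (k + 1) - ∑ i ∈ Icc 1 k, (d i - e i)| ≤ M := by
  induction k with
  | zero => simpa [h1] using (abs_nonneg _).trans (hS 1 le_rfl)
  | succ k ih =>
    obtain ⟨ih₁, ih₂⟩ := abs_le.1 ih
    have hS' := hS (k + 1) (by omega)
    rw [sum_Icc_succ_top (by omega)] at hS' ⊢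
    obtain ⟨hS₁, hS₂⟩ := abs_le.1 hS'
    rw [hu (k + 1) (by omega), hv (k + 1) (by omega), abs_le]
    constructor
    · have : f (v (k + 1) + e (k + 1)) - f (u (k + 1) + d (k + 1))
          ≤ M - (∑ i ∈ Icc 1 k, (d i - e i) + (d (k + 1) - e (k + 1))) :=
        (hmono.sub_le_max_sub_zero hlip _ _).trans
          (max_le (by linarith) (by linarith))
      linarith
    · have : f (u (k + 1) + d (k + 1)) - f (v (k + 1) + e (k + 1))
          ≤ M + (∑ i ∈ Icc 1 k, (d i - e i) + (d (k + 1) - e (k + 1))) :=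
        (hmono.sub_le_max_sub_zero hlip _ _).trans
          (max_le (by linarith) (by linarith))
      linarith

lemma abs_sub_le_two_mul_of_abs_sum_Icc_sub_le (hmono : Monotone f) (hlip : LipschitzWith 1 f)
    (h1 : u 1 = v 1)
    (hu : ∀ k ≥ 1, u (k + 1) = f (u k + d k)) (hv : ∀ k ≥ 1, v (k + 1) = f (v k + e k))
    (hS : ∀ k ≥ 1, |∑ i ∈ Icc 1 k, (d i - e i)| ≤ M) : ∀ k ≥ 1, |u k - v k| ≤ 2 * M := by
  intro k hk
  obtain ⟨p, rfl⟩ : ∃ p, k = p + 1 := ⟨k - 1, by omega⟩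
  have hSp : |∑ i ∈ Icc 1 p, (d i - e i)| ≤ M := by
    rcases Nat.eq_zero_or_pos p with rfl | hp
    · simpa using (abs_nonneg _).trans (hS 1 le_rfl)
    · exact hS p hp
  linarith [abs_sub_sub_sum_Icc_le hmono hlip h1 hu hv hS p,
    abs_sub_abs_le_abs_sub (u (p + 1) - v (p + 1)) (∑ i ∈ Icc 1 p, (d i - e i))]

end ProjectedRecursion

lemma EuclideanSpace.norm_le_card_mul {ι : Type*} [Fintype ι] {v : EuclideanSpace ℝ ι} {c : ℝ}
    (h : ∀ j, |v j| ≤ c) : ‖v‖ ≤ Fintype.card ι * c := by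
  calc ‖v‖ ≤ ∑ j, ‖v j • EuclideanSpace.basisFun ι ℝ j‖ := by
        conv_lhs => rw [← (EuclideanSpace.basisFun ι ℝ).sum_repr v]
        simpa using norm_sum_le _ _
    _ ≤ ∑ _j : ι, c := by
        gcongr with j
        simpa [norm_smul] using h j
    _ = Fintype.card ι * c := by simp

theorem queues_as_approximate_multipliers_general {n m : ℕ}
    (A : Matrix (Fin m) (Fin n) ℝ)
    (D : Set (Fin n → ℝ))
    (x z : ℕ → (Fin n → ℝ)) (hx : ∀ k, x k ∈ D)
    (hz1 : z 1 ∈ convexHull ℝ D)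
    (β : ℝ) (hβ : β ∈ Set.Ioo (0:ℝ) 1)
    (hzupd : ∀ k ≥ 1, z (k + 1) = (1 - β) • z k + β • x k)
    (α lambar : ℝ) (hα : 0 < α)
    (b : Fin m → ℝ) (bk : ℕ → Fin m → ℝ)
    (σ1 σ2 : ℝ)
    (hσ1 : ∀ w ∈ convexHull ℝ D, ∀ j, |A.mulVec w j| ≤ σ1 / 2)
    (hb : ∀ j, ∀ k : ℕ, k ≥ 1 → |∑ i ∈ Finset.Icc 1 k, (bk i j - b j)| ≤ σ2)
    (lam lamt : ℕ → EuclideanSpace ℝ (Fin m))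
    (hinit : lamt 1 = lam 1)
    (hlam : ∀ k ≥ 1, ∀ j,
      lam (k + 1) j = min (max (lam k j + α * (A.mulVec (z (k + 1)) j - b j)) 0) lambar)
    (hlamt : ∀ k ≥ 1, ∀ j,
      lamt (k + 1) j = min (max (lamt k j + α * (A.mulVec (x k) j - bk k j)) 0) lambar) :
    ∀ k ≥ 1, ‖lamt k - lam k‖ ≤ 2 * m * α * (σ1 / β + σ2) := by
  have hdrift : ∀ j, ∀ k ≥ 1, |∑ i ∈ Icc 1 k,
      (α * (A.mulVec (x i) j - bk i j) - α * (A.mulVec (z (i + 1)) j - b j))|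
        ≤ α * (σ1 / β + σ2) := by
    intro j k hk
    have hAxz := abs_sum_Icc_sub_le_div (ℓ := LinearMap.proj j ∘ₗ A.mulVecLin)
      (convex_convexHull ℝ D) (fun w hw => hσ1 w hw j)
      (fun i => subset_convexHull ℝ D (hx i)) hz1 hβ hzupd k
    have hsplit : ∑ i ∈ Icc 1 k,
        (α * (A.mulVec (x i) j - bk i j) - α * (A.mulVec (z (i + 1)) j - b j))
          = α * (∑ i ∈ Icc 1 k, (A.mulVec (x i) j - A.mulVec (z (i + 1)) j)
            - ∑ i ∈ Icc 1 k, (bk i j - b j)) := by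
      rw [← sum_sub_distrib, mul_sum]
      exact sum_congr rfl fun i _ => by ring
    rw [hsplit, abs_mul, abs_of_pos hα]
    gcongr
    exact (abs_sub _ _).trans (add_le_add hAxz (hb j k hk))
  intro k hk
  calc ‖lamt k - lam k‖ ≤ Fintype.card (Fin m) * (2 * (α * (σ1 / β + σ2))) :=
        EuclideanSpace.norm_le_card_mul fun j =>
          abs_sub_le_two_mul_of_abs_sum_Icc_sub_le (u := fun k => lamt k j)
            (v := fun k => lam k j) ((monotone_id.max monotone_const).min monotone_const)
            ((LipschitzWith.id.max_const 0).min_const lambar) (congrArg (· j) hinit)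
            (fun k hk => hlamt k hk j) (fun k hk => hlam k hk j) (hdrift j) k hk
    _ = 2 * m * α * (σ1 / β + σ2) := by rw [Fintype.card_fin]; ring

/-- Queues as approximate multipliers: the truncated multiplier sequence driven by
`A z_{k+1} - b` and the queue-like sequence driven by `A x_k - b_k` stay within
`2 m α (σ₁/β + σ₂)` of each other in Euclidean norm. -/
theorem queues_as_approximate_multipliers {n m : ℕ}
    (A : Matrix (Fin m) (Fin n) ℝ)
    (D : Set (Fin n → ℝ)) (hD : D.Finite) (hne : D.Nonempty)
    (x z : ℕ → (Fin n → ℝ)) (hx : ∀ k, x k ∈ D)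
    (hz1 : z 1 ∈ convexHull ℝ D)
    (β : ℝ) (hβ : β ∈ Set.Ioo (0:ℝ) 1)
    (hzupd : ∀ k ≥ 1, z (k + 1) = (1 - β) • z k + β • x k)
    (α lambar : ℝ) (hα : 0 < α) (hlambar : 0 < lambar)
    (b : Fin m → ℝ) (bk : ℕ → Fin m → ℝ)
    (σ1 σ2 : ℝ) (hσ2 : 0 ≤ σ2)
    (hσ1 : ∀ w ∈ convexHull ℝ D, ∀ j, |A.mulVec w j| ≤ σ1 / 2)
    (hb : ∀ j, ∀ k : ℕ, k ≥ 1 → |∑ i ∈ Finset.Icc 1 k, (bk i j - b j)| ≤ σ2)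
    (lam lamt : ℕ → EuclideanSpace ℝ (Fin m))
    (hinit : lamt 1 = lam 1) (hinitm : ∀ j, lam 1 j ∈ Set.Icc (0:ℝ) lambar)
    (hlam : ∀ k ≥ 1, ∀ j,
      lam (k + 1) j = min (max (lam k j + α * (A.mulVec (z (k + 1)) j - b j)) 0) lambar)
    (hlamt : ∀ k ≥ 1, ∀ j,
      lamt (k + 1) j = min (max (lamt k j + α * (A.mulVec (x k) j - bk k j)) 0) lambar) :
    ∀ k ≥ 1, ‖lamt k - lam k‖ ≤ 2 * m * α * (σ1 / β + σ2) :=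
  queues_as_approximate_multipliers_general A D x z hx hz1 β hβ hzupd α lambar hα b bk σ1 σ2 hσ1 hb
    lam lamt hinit hlam hlamt
end

section
/- Consider the update λ_{k+1} = [λ_k + α g(z_{k+1})]^+ (coordinatewise positive part), where each g_j is convex on C. Then for z°_k = (1/k)∑_{i=1}^k z_{i+1}, the constraint violation satisfies g_j(z°_k) ≤ λ_{k+1}^{(j)}/(αk) for every j; in particular if λ_k^{(j)} ≤ λ̄ for all k, then g_j(z°_k) ≤ λ̄/(αk). -/
/-!
Each positive-part update gives `λ_{i+1} ≥ λ_i + α g(z_{i+1})`; telescoping from `λ_1 ≥ 0` yields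
`α ∑_{i=1}^k g(z_{i+1}) ≤ λ_{k+1}`, and Jensen's inequality bounds `g` at the running average
`z°_k` by `1/k` times that sum.
-/

open Finset

theorem add_sum_Icc_le_of_add_le {M : Type*} [AddCommMonoid M] [PartialOrder M]
    [IsOrderedAddMonoid M] {u a : ℕ → M} (h : ∀ i ≥ 1, u i + a i ≤ u (i + 1)) (k : ℕ) :
    u 1 + ∑ i ∈ Icc 1 k, a i ≤ u (k + 1) := by
  induction k with
  | zero => simp
  | succ k ih =>
    rw [sum_Icc_succ_top (by omega), ← add_assoc]
    exact (add_le_add_left ih _).trans (h (k + 1) (by omega))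

theorem ConvexOn.map_inv_card_smul_sum_le {ι E : Type*} [AddCommGroup E] [Module ℝ E] {s : Set E}
    {f : E → ℝ} {t : Finset ι} {p : ι → E} (hf : ConvexOn ℝ s f) (ht : t.Nonempty)
    (hp : ∀ i ∈ t, p i ∈ s) :
    f ((#t : ℝ)⁻¹ • ∑ i ∈ t, p i) ≤ (#t : ℝ)⁻¹ * ∑ i ∈ t, f (p i) := by
  have h := hf.map_centerMass_le (w := fun _ => (1 : ℝ)) (fun _ _ => zero_le_one)
    (by simpa using ht) hp
  simpa [centerMass] using h

theorem constraint_violation_bound_general {n m : ℕ}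
    (C : Set (EuclideanSpace ℝ (Fin n)))
    (g : Fin m → EuclideanSpace ℝ (Fin n) → ℝ)
    (hg : ∀ j, ConvexOn ℝ C (g j))
    (z : ℕ → EuclideanSpace ℝ (Fin n)) (hz : ∀ k, z k ∈ C)
    (α : ℝ) (hα : 0 < α)
    (lam : ℕ → Fin m → ℝ) (hinit : ∀ j, 0 ≤ lam 1 j)
    (hupd : ∀ k ≥ 1, ∀ j, lam (k + 1) j = max (lam k j + α * g j (z (k + 1))) 0)
    (lambar : ℝ) :
    ∀ k : ℕ, k ≥ 1 → ∀ j,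
      g j ((k:ℝ)⁻¹ • ∑ i ∈ Finset.Icc 1 k, z (i + 1)) ≤ lam (k + 1) j / (α * k)
      ∧ ((∀ k' ≥ 1, ∀ j', lam k' j' ≤ lambar) →
          g j ((k:ℝ)⁻¹ • ∑ i ∈ Finset.Icc 1 k, z (i + 1)) ≤ lambar / (α * k)) := by
  intro k hk j
  have htelescope : lam 1 j + ∑ i ∈ Icc 1 k, α * g j (z (i + 1)) ≤ lam (k + 1) j :=
    add_sum_Icc_le_of_add_le (u := fun i => lam i j)
      (fun i hi => (hupd i hi j).symm ▸ le_max_left _ _) k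
  have hjensen := (hg j).map_inv_card_smul_sum_le (t := Icc 1 k) (p := fun i => z (i + 1))
    (nonempty_Icc.mpr hk) (fun i _ => hz _)
  rw [Nat.card_Icc, Nat.add_sub_cancel] at hjensen
  have hviolation : g j ((k:ℝ)⁻¹ • ∑ i ∈ Icc 1 k, z (i + 1)) ≤ lam (k + 1) j / (α * k) := by
    rw [← mul_sum] at htelescope
    calc _ ≤ (k : ℝ)⁻¹ * ∑ i ∈ Icc 1 k, g j (z (i + 1)) := hjensen
      _ ≤ (k : ℝ)⁻¹ * (lam (k + 1) j / α) := by
        gcongr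
        rw [le_div_iff₀ hα]
        linarith [hinit j]
      _ = lam (k + 1) j / (α * k) := by field_simp
  exact ⟨hviolation, fun hbound =>
    hviolation.trans (by gcongr; exact hbound (k + 1) (by omega) j)⟩

/-- Constraint violation bound: with the positive-part dual update,
`g_j(z°_k) ≤ λ_{k+1}^{(j)}/(α k)`; in particular if all multiplier coordinates are
bounded by `λ̄` then `g_j(z°_k) ≤ λ̄/(α k)`. -/
theorem constraint_violation_bound {n m : ℕ}
    (C : Set (EuclideanSpace ℝ (Fin n))) (hC : Convex ℝ C)
    (g : Fin m → EuclideanSpace ℝ (Fin n) → ℝ)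
    (hg : ∀ j, ConvexOn ℝ C (g j))
    (z : ℕ → EuclideanSpace ℝ (Fin n)) (hz : ∀ k, z k ∈ C)
    (α : ℝ) (hα : 0 < α)
    (lam : ℕ → Fin m → ℝ) (hinit : ∀ j, 0 ≤ lam 1 j)
    (hupd : ∀ k ≥ 1, ∀ j, lam (k + 1) j = max (lam k j + α * g j (z (k + 1))) 0)
    (lambar : ℝ) (hlambar : 0 < lambar) :
    ∀ k : ℕ, k ≥ 1 → ∀ j,
      g j ((k:ℝ)⁻¹ • ∑ i ∈ Finset.Icc 1 k, z (i + 1)) ≤ lam (k + 1) j / (α * k)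
      ∧ ((∀ k' ≥ 1, ∀ j', lam k' j' ≤ lambar) →
          g j ((k:ℝ)⁻¹ • ∑ i ∈ Finset.Icc 1 k, z (i + 1)) ≤ lambar / (α * k)) :=
  constraint_violation_bound_general C g hg z hz α hα lam hinit hupd lambar
end

section
/- With the positive-part dual update λ_{k+1} = [λ_k + α g(z_{k+1})]^+ where {z_k} ⊂ C, λ_1 ⪰ 0 with ‖λ_1‖₂² ≤ m·λ̄², and ‖g(z)‖₂² ≤ m·ḡ² on C, the averaged complementary slackness is lower bounded: (1/k)∑_{i=1}^k λ_iᵀ g(z_{i+1}) ≥ −m·λ̄²/(2αk) − (α/2)·m·ḡ². -/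
/-!
The squared norm `V k = ‖λ_k‖²` is a Lyapunov function for the dual update: since projecting onto
the nonnegative orthant does not increase norms,
`V (i + 1) ≤ ‖λ_i + α g(z_{i+1})‖² ≤ V i + 2α λ_iᵀ g(z_{i+1}) + α² m ḡ²`.
Summing over `i = 1, …, k` and using `0 ≤ V (k + 1)` and `V 1 ≤ m λ̄²` gives
`0 ≤ m λ̄² + 2α ∑ λ_iᵀ g(z_{i+1}) + k α² m ḡ²`, which rearranges to the bound.
-/

open Finset

lemma sq_max_zero_le (x : ℝ) : max x 0 ^ 2 ≤ x ^ 2 := by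
  rcases le_total x 0 with hx | hx
  · simp [max_eq_right hx, sq_nonneg]
  · rw [max_eq_left hx]

lemma sum_sq_max_add_smul_le {ι : Type*} [Fintype ι] (a v : ι → ℝ) (α : ℝ) :
    ∑ j, max (a j + α * v j) 0 ^ 2 ≤
      ∑ j, a j ^ 2 + 2 * α * ∑ j, a j * v j + α ^ 2 * ∑ j, v j ^ 2 :=
  calc ∑ j, max (a j + α * v j) 0 ^ 2
      ≤ ∑ j, (a j + α * v j) ^ 2 := sum_le_sum fun j _ => sq_max_zero_le _
    _ = ∑ j, a j ^ 2 + 2 * α * ∑ j, a j * v j + α ^ 2 * ∑ j, v j ^ 2 := by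
      simp only [mul_sum, ← sum_add_distrib]
      exact sum_congr rfl fun j _ => by ring

lemma le_add_sum_Icc_of_succ_le {V c : ℕ → ℝ} (h : ∀ i ≥ 1, V (i + 1) ≤ V i + c i) (k : ℕ) :
    V (k + 1) ≤ V 1 + ∑ i ∈ Icc 1 k, c i := by
  induction k with
  | zero => simp
  | succ k ih =>
    rw [sum_Icc_succ_top (by omega)]
    linarith [h (k + 1) (by omega)]

lemma inv_mul_ge_of_nonneg_add {k α L G S : ℝ} (hk : 0 < k) (hα : 0 < α)
    (h : 0 ≤ L + 2 * α * S + k * (α ^ 2 * G)) :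
    k⁻¹ * S ≥ -(L / (2 * α * k)) - α / 2 * G := by
  have e : k⁻¹ * S - (-(L / (2 * α * k)) - α / 2 * G) =
      (L + 2 * α * S + k * (α ^ 2 * G)) / (2 * α * k) := by
    field_simp
    ring
  rw [ge_iff_le, ← sub_nonneg, e]
  positivity

theorem averaged_complementary_slackness_lower_bound_general {n m : ℕ}
    (C : Set (EuclideanSpace ℝ (Fin n)))
    (g : Fin m → EuclideanSpace ℝ (Fin n) → ℝ)
    (z : ℕ → EuclideanSpace ℝ (Fin n)) (hz : ∀ k, z k ∈ C)
    (α lambar gbar : ℝ) (hα : 0 < α)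
    (lam : ℕ → Fin m → ℝ)
    (hlam1 : ∑ j, (lam 1 j) ^ 2 ≤ m * lambar ^ 2)
    (hgb : ∀ w ∈ C, ∑ j, (g j w) ^ 2 ≤ m * gbar ^ 2)
    (hupd : ∀ k ≥ 1, ∀ j, lam (k + 1) j = max (lam k j + α * g j (z (k + 1))) 0) :
    ∀ k : ℕ, k ≥ 1 →
      (k:ℝ)⁻¹ * ∑ i ∈ Finset.Icc 1 k, ∑ j, lam i j * g j (z (i + 1))
        ≥ -(m * lambar ^ 2 / (2 * α * k)) - α / 2 * (m * gbar ^ 2) := by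
  intro k hk
  have step : ∀ i ≥ 1, ∑ j, lam (i + 1) j ^ 2 ≤ ∑ j, lam i j ^ 2 +
      (2 * α * ∑ j, lam i j * g j (z (i + 1)) + α ^ 2 * (m * gbar ^ 2)) := fun i hi => by
    simp only [hupd i hi]
    have hproj := sum_sq_max_add_smul_le (lam i) (fun j => g j (z (i + 1))) α
    have hbound := mul_le_mul_of_nonneg_left (hgb _ (hz (i + 1))) (sq_nonneg α)
    linarith
  have drift := le_add_sum_Icc_of_succ_le (V := fun i => ∑ j, lam i j ^ 2) step k
  rw [sum_add_distrib, ← mul_sum, sum_const, Nat.card_Icc, Nat.add_sub_cancel,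
    nsmul_eq_mul] at drift
  refine inv_mul_ge_of_nonneg_add (by exact_mod_cast hk) hα ?_
  have hV : 0 ≤ ∑ j, lam (k + 1) j ^ 2 := sum_nonneg fun j _ => sq_nonneg _
  linarith

/-- Averaged complementary slackness lower bound: with the positive-part dual update,
`(1/k) ∑_{i=1}^k λ_iᵀ g(z_{i+1}) ≥ - m λ̄²/(2 α k) - (α/2) m ḡ²`. -/
theorem averaged_complementary_slackness_lower_bound {n m : ℕ}
    (C : Set (EuclideanSpace ℝ (Fin n)))
    (g : Fin m → EuclideanSpace ℝ (Fin n) → ℝ)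
    (z : ℕ → EuclideanSpace ℝ (Fin n)) (hz : ∀ k, z k ∈ C)
    (α lambar gbar : ℝ) (hα : 0 < α) (hlambar : 0 < lambar) (hgbar : 0 < gbar)
    (lam : ℕ → Fin m → ℝ) (hinit : ∀ j, 0 ≤ lam 1 j)
    (hlam1 : ∑ j, (lam 1 j) ^ 2 ≤ m * lambar ^ 2)
    (hgb : ∀ w ∈ C, ∑ j, (g j w) ^ 2 ≤ m * gbar ^ 2)
    (hupd : ∀ k ≥ 1, ∀ j, lam (k + 1) j = max (lam k j + α * g j (z (k + 1))) 0) :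
    ∀ k : ℕ, k ≥ 1 →
      (k:ℝ)⁻¹ * ∑ i ∈ Finset.Icc 1 k, ∑ j, lam i j * g j (z (i + 1))
        ≥ -(m * lambar ^ 2 / (2 * α * k)) - α / 2 * (m * gbar ^ 2) :=
  averaged_complementary_slackness_lower_bound_general C g z hz α lambar gbar hα lam hlam1 hgb hupd
end
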